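/- Let α be a real number and (c_n)_{n≥1} a sequence of positive integers, with a_n, A_n the data of the generalized alternating-Sylvester expansion of α. For every n ≥ 1 with A_n ≠ 0, one has A_{n+1} < 1/(a_n + 1). -/

import Mathlib

open Filter Topology

/-- The rational value `c/⌊c/x⌋` used at each step (0 if `x = 0`). -/
noncomputable def gasQaux (cn : ℕ) (x : ℝ) : ℝ :=
  if x = 0 then 0 else (cn : ℝ) / (⌊(cn : ℝ) / x⌋ : ℝ)

/-- `gasA c α n` is `A_n` of the generalized alternating-Sylvester expansion of `α`
(for `n ≥ 1`; the value at `0` is a dummy). `A_1 = α - ⌊α⌋`, `A_{n+1} = q_n - A_n`. -/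
noncomputable def gasA (c : ℕ → ℕ) (α : ℝ) : ℕ → ℝ
  | 0 => 0
  | 1 => α - ⌊α⌋
  | n + 2 => gasQaux (c (n + 1)) (gasA c α (n + 1)) - gasA c α (n + 1)

/-- `gasQ c α n` is `q_n`: `q_0 = ⌊α⌋`; for `n ≥ 1`, `q_n = c_n / a_n` if `A_n ≠ 0`, else `0`. -/
noncomputable def gasQ (c : ℕ → ℕ) (α : ℝ) : ℕ → ℝ
  | 0 => (⌊α⌋ : ℤ)
  | n + 1 => gasQaux (c (n + 1)) (gasA c α (n + 1))

/-- `gasa c α n` is `a_n = ⌊c_n / A_n⌋` (meaningful when `A_n ≠ 0`). -/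
noncomputable def gasa (c : ℕ → ℕ) (α : ℝ) (n : ℕ) : ℤ :=
  ⌊(c n : ℝ) / gasA c α n⌋

/-!
Each step replaces `A ∈ (0, 1)` by `c/a - A` with `a = ⌊c/A⌋`. From `a ≤ c/A < a + 1` we get
`c/(a+1) < A ≤ c/a`, so `0 ≤ c/a - A < c/(a(a+1))`; and since `c` is an integer and `A < 1`,
`c ≤ c/A` gives `c ≤ a`, whence `c/(a(a+1)) ≤ 1/(a+1)`. In particular every `A_n` stays in
`[0, 1)`, which keeps the step applicable.
-/

section Step

variable {n : ℕ} {x : ℝ}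

lemma natCast_le_floor_div (hx0 : 0 < x) (hx1 : x ≤ 1) : (n : ℤ) ≤ ⌊(n : ℝ) / x⌋ :=
  Int.le_floor.2 <| by exact_mod_cast le_div_self n.cast_nonneg hx0 hx1

lemma one_le_floor_div (hn : 0 < n) (hx0 : 0 < x) (hx1 : x ≤ 1) : (1 : ℝ) ≤ ⌊(n : ℝ) / x⌋ := by
  have := natCast_le_floor_div (n := n) hx0 hx1
  exact_mod_cast (show (1 : ℤ) ≤ n by exact_mod_cast hn).trans this

lemma gasQaux_sub_self_nonneg (hn : 0 < n) (hx0 : 0 ≤ x) (hx1 : x ≤ 1) :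
    0 ≤ gasQaux n x - x := by
  rcases hx0.eq_or_lt with rfl | hx0
  · simp [gasQaux]
  have ha := one_le_floor_div hn hx0 hx1
  rw [gasQaux, if_neg hx0.ne', sub_nonneg, le_div_iff₀ (by linarith), ← le_div_iff₀' hx0]
  exact Int.floor_le _

lemma gasQaux_sub_self_lt (hn : 0 < n) (hx0 : 0 < x) (hx1 : x ≤ 1) :
    gasQaux n x - x < 1 / ((⌊(n : ℝ) / x⌋ : ℝ) + 1) := by
  set a : ℤ := ⌊(n : ℝ) / x⌋
  have ha : (1 : ℝ) ≤ a := one_le_floor_div hn hx0 hx1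
  have hna : (n : ℝ) ≤ a := by exact_mod_cast natCast_le_floor_div hx0 hx1
  have hx : (n : ℝ) / (a + 1) < x := by
    rw [div_lt_iff₀ (by linarith), ← div_lt_iff₀' hx0]
    exact Int.lt_floor_add_one _
  calc gasQaux n x - x
      < n / a - n / (a + 1) := by rw [gasQaux, if_neg hx0.ne']; linarith
    _ = n / a * (1 / (a + 1)) := by field_simp; ring
    _ ≤ 1 / (a + 1) := by
        apply mul_le_of_le_one_left (by positivity)
        rwa [div_le_one (by linarith)]

end Step

section Expansion

variable {c : ℕ → ℕ} {α : ℝ}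

lemma gasA_succ {n : ℕ} (hn : 1 ≤ n) :
    gasA c α (n + 1) = gasQaux (c n) (gasA c α n) - gasA c α n := by
  obtain ⟨m, rfl⟩ := Nat.exists_eq_add_of_le' hn
  rfl

lemma gasA_mem_Ico (hc : ∀ n, 1 ≤ n → 0 < c n) {n : ℕ} (hn : 1 ≤ n) :
    gasA c α n ∈ Set.Ico 0 1 := by
  induction n, hn using Nat.le_induction with
  | base => exact ⟨Int.fract_nonneg α, Int.fract_lt_one α⟩
  | succ n hn ih =>
    obtain ⟨h0, h1⟩ := ih
    rw [gasA_succ hn]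
    refine ⟨gasQaux_sub_self_nonneg (hc n hn) h0 h1.le, ?_⟩
    rcases h0.eq_or_lt with h | h
    · simp [← h, gasQaux]
    · have ha := one_le_floor_div (hc n hn) h h1.le
      refine (gasQaux_sub_self_lt (hc n hn) h h1.le).trans_le ?_
      rw [div_le_one (by linarith)]
      linarith

end Expansion

/-- For every $n \ge 1$ with $A_n \neq 0$, $A_{n+1} < 1/(a_n + 1)$. -/
theorem gas_An_succ_lt (c : ℕ → ℕ) (hc : ∀ n, 1 ≤ n → 0 < c n) (α : ℝ) :
    ∀ n, 1 ≤ n → gasA c α n ≠ 0 →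
      gasA c α (n + 1) < 1 / ((gasa c α n : ℝ) + 1) := by
  intro n hn hne
  obtain ⟨h0, h1⟩ := gasA_mem_Ico (α := α) hc hn
  rw [gasA_succ hn]
  exact gasQaux_sub_self_lt (hc n hn) (h0.lt_of_ne' hne) h1.le
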